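/- arXiv:1603.01744 — 3 statements merged into one kernel-verified Lean document; each statement's English description precedes it below -/
import Mathlib

section
/- Let M ≥ 2, d ≥ 2 and let A = (A_1,…,A_M) be an irreducible tuple of d×d real matrices. Then for every s > 0 the pressure P(A,s) is finite, i.e. P(A,s) > −∞. -/
open MeasureTheory Filter Topology

/-- The operator norm on square real matrices induced by the Euclidean norm. -/
noncomputable def opNorm {n : Type*} [Fintype n] [DecidableEq n]
    (X : Matrix n n ℝ) : ℝ :=
  ‖Matrix.toEuclideanCLM (𝕜 := ℝ) X‖

/-- The spectral radius `ρ(X) = inf_{k ≥ 1} ‖X^k‖^(1/k)` (Gelfand). -/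
noncomputable def specRad {n : Type*} [Fintype n] [DecidableEq n]
    (X : Matrix n n ℝ) : ℝ :=
  ⨅ k : ℕ, opNorm (X ^ (k + 1)) ^ ((1 : ℝ) / (k + 1))

/-- The product `A_{x_n} ⋯ A_{x_1}` associated to the word `x = (x_1, …, x_n)`. -/
noncomputable def wordProd {M d n : ℕ} (A : Fin M → Matrix (Fin d) (Fin d) ℝ)
    (x : Fin n → Fin M) : Matrix (Fin d) (Fin d) ℝ :=
  (List.ofFn (fun i => A (x i))).reverse.prod

/-- The product `A_{x_n} ⋯ A_{x_1}` associated to the word `w = [x_1, …, x_n]`. -/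
noncomputable def listProd {M d : ℕ} (A : Fin M → Matrix (Fin d) (Fin d) ℝ)
    (w : List (Fin M)) : Matrix (Fin d) (Fin d) ℝ :=
  ((w.map A).reverse).prod

/-- Irreducibility: no invariant subspace `U` with `0 < dim U < d`. -/
def IsIrredTuple {M d : ℕ} (A : Fin M → Matrix (Fin d) (Fin d) ℝ) : Prop :=
  ¬ ∃ U : Submodule ℝ (Fin d → ℝ),
      (∀ i, U.map (A i).mulVecLin ≤ U) ∧ U ≠ ⊥ ∧ U ≠ ⊤

/-- The shift map on `Σ_M = {1,…,M}^ℕ`. -/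
def shift {M : ℕ} : (ℕ → Fin M) → (ℕ → Fin M) := fun x n => x (n + 1)

/-- The cylinder set `[x_1 ⋯ x_n]` determined by the word `w = [x_1, …, x_n]`. -/
def cyl {M : ℕ} (w : List (Fin M)) : Set (ℕ → Fin M) :=
  {y | ∀ i : Fin w.length, y (i : ℕ) = w.get i}

/-- The Gibbs inequality for `(A, s)` with constants `C > 0`, `P ∈ ℝ`. -/
def IsGibbs {M d : ℕ} (A : Fin M → Matrix (Fin d) (Fin d) ℝ) (s C P : ℝ)
    (μ : Measure (ℕ → Fin M)) : Prop :=
  ∀ w : List (Fin M), w ≠ [] →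
    C⁻¹ * (μ (cyl w)).toReal ≤ Real.exp (-(w.length : ℝ) * P) * opNorm (listProd A w) ^ s ∧
    Real.exp (-(w.length : ℝ) * P) * opNorm (listProd A w) ^ s ≤ C * (μ (cyl w)).toReal

/-- The pressure `P(A,s) = inf_{n ≥ 1} (1/n) log Σ_{|x| = n} ‖A_{x_n} ⋯ A_{x_1}‖^s ∈ [-∞, ∞)`,
with the convention that a term is `-∞` when the corresponding sum vanishes. -/
noncomputable def pressure {M d : ℕ} (A : Fin M → Matrix (Fin d) (Fin d) ℝ) (s : ℝ) : EReal :=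
  ⨅ n : ℕ,
    if (∑ x : Fin (n + 1) → Fin M, opNorm (wordProd A x) ^ s) = 0 then (⊥ : EReal)
    else ((Real.log (∑ x : Fin (n + 1) → Fin M, opNorm (wordProd A x) ^ s) / (n + 1) : ℝ) : EReal)

/-!
The partition sum `∑_{|x|=n} ‖A_x‖^s` is at least `max_{|x|=n} ‖A_x‖^s`, so it suffices to find,
for every `n`, a word of length `n` with `‖A_x‖ ≥ c βⁿ`. The completely positive map
`T X = ∑ i, A i X (A i)ᴴ` satisfies `Tⁿ 1 = ∑_{|x|=n} A_x A_xᴴ`, so `‖Tⁿ 1‖ ≤ ∑_{|x|=n} ‖A_x‖²`.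
Irreducibility leaves the `A i` without a common kernel vector, so products of every length are
nonzero and `Tⁿ 1` has positive trace. In finite dimension an orbit `Tⁿ v` that never vanishes
decays at most exponentially (Fitting decomposition); averaging over the `Mⁿ` words concludes.
-/

open Matrix

theorem exists_pos_mul_pow_le_of_forall_ge_mul_le {a : ℕ → ℝ} {γ : ℝ} {N : ℕ}
    (ha : ∀ n, 0 < a n) (hγ : 0 < γ) (h : ∀ n ≥ N, γ * a n ≤ a (n + 1)) :
    ∃ c > 0, ∀ n, c * γ ^ n ≤ a n := by
  set c := (Finset.range (N + 1)).inf' Finset.nonempty_range_add_one fun j => a j / γ ^ j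
  have hc : ∀ n, c ≤ a n / γ ^ n := by
    intro n
    induction n with
    | zero => exact Finset.inf'_le _ (by simp)
    | succ n ih =>
      rcases le_or_gt (n + 1) N with hn | hn
      · exact Finset.inf'_le _ (Finset.mem_range.2 (by omega))
      · calc c ≤ a n / γ ^ n := ih
          _ = γ * a n / γ ^ (n + 1) := by field_simp; ring
          _ ≤ a (n + 1) / γ ^ (n + 1) := by gcongr; exact h n (by omega)
  refine ⟨c, (Finset.lt_inf'_iff _).2 fun j _ => by have := ha j; positivity, fun n => ?_⟩
  have := hc n
  rwa [le_div_iff₀ (by positivity)] at this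

namespace Module.End

variable {𝕜 E : Type*} [NontriviallyNormedField 𝕜] [CompleteSpace 𝕜] [NormedAddCommGroup E]
  [NormedSpace 𝕜 E] [FiniteDimensional 𝕜 E]

/-- Past the Fitting index `N`, `T` is injective on the range of `T ^ N`, hence bounded below
there by finite dimensionality. -/
theorem exists_forall_ge_mul_norm_pow_apply_le (T : Module.End 𝕜 E) (v : E) :
    ∃ N, ∃ γ > 0, ∀ n ≥ N, γ * ‖(T ^ n) v‖ ≤ ‖(T ^ (n + 1)) v‖ := by
  obtain ⟨N, hN, hdisj⟩ :=
    ((eventually_ge_atTop 1).and T.eventually_disjoint_ker_pow_range_pow).exists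
  set W := LinearMap.range (T ^ N)
  have hker : LinearMap.ker (T ∘ₗ W.subtype) = ⊥ := by
    refine (Submodule.eq_bot_iff _).2 fun w hw => Subtype.ext ?_
    refine Submodule.disjoint_def.1 hdisj w ?_ w.2
    rw [LinearMap.mem_ker, LinearMap.comp_apply, Submodule.subtype_apply] at hw
    rw [LinearMap.mem_ker, ← Nat.sub_add_cancel hN, pow_succ, Module.End.mul_apply, hw, map_zero]
  obtain ⟨K, hK, hanti⟩ := (T ∘ₗ W.subtype).exists_antilipschitzWith hker
  refine ⟨N, (K : ℝ)⁻¹, by positivity, fun n hn => ?_⟩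
  have hmem : (T ^ n) v ∈ W := by
    obtain ⟨k, rfl⟩ := Nat.exists_eq_add_of_le hn
    exact ⟨(T ^ k) v, by rw [pow_add, Module.End.mul_apply]⟩
  have := ZeroHomClass.bound_of_antilipschitz _ hanti ⟨_, hmem⟩
  rw [inv_mul_le_iff₀ (by positivity)]
  simpa [pow_succ'] using this

theorem exists_pos_mul_pow_le_norm_pow_apply (T : Module.End 𝕜 E) (v : E)
    (hv : ∀ n, (T ^ n) v ≠ 0) : ∃ c > 0, ∃ γ > 0, ∀ n, c * γ ^ n ≤ ‖(T ^ n) v‖ := by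
  obtain ⟨N, γ, hγ, hstep⟩ := T.exists_forall_ge_mul_norm_pow_apply_le v
  obtain ⟨c, hc, hbound⟩ :=
    exists_pos_mul_pow_le_of_forall_ge_mul_le (fun n => norm_pos_iff.2 (hv n)) hγ hstep
  exact ⟨c, hc, γ, hγ, hbound⟩

end Module.End

theorem opNorm_nonneg {n : Type*} [Fintype n] [DecidableEq n] (X : Matrix n n ℝ) :
    0 ≤ opNorm X :=
  norm_nonneg _

section WordProd

variable {M d : ℕ} (A : Fin M → Matrix (Fin d) (Fin d) ℝ)

theorem wordProd_zero (x : Fin 0 → Fin M) : wordProd A x = 1 := by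
  simp [wordProd]

theorem wordProd_cons {n : ℕ} (i : Fin M) (x : Fin n → Fin M) :
    wordProd A (Fin.cons i x) = wordProd A x * A i := by
  unfold wordProd
  rw [List.ofFn_succ]
  simp

theorem wordProd_snoc {n : ℕ} (x : Fin n → Fin M) (i : Fin M) :
    wordProd A (Fin.snoc x i) = A i * wordProd A x := by
  unfold wordProd
  rw [List.ofFn_succ']
  simp

end WordProd

section CompletelyPositive

variable {M d : ℕ}

noncomputable def cpMap (A : Fin M → Matrix (Fin d) (Fin d) ℝ) :
    Module.End ℝ (Matrix (Fin d) (Fin d) ℝ) :=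
  ∑ i, LinearMap.mulLeft ℝ (A i) ∘ₗ LinearMap.mulRight ℝ (A i)ᴴ

variable (A : Fin M → Matrix (Fin d) (Fin d) ℝ)

theorem cpMap_apply (X : Matrix (Fin d) (Fin d) ℝ) : cpMap A X = ∑ i, A i * X * (A i)ᴴ := by
  simp [cpMap, Matrix.mul_assoc]

theorem cpMap_pow_apply (n : ℕ) (X : Matrix (Fin d) (Fin d) ℝ) :
    (cpMap A ^ n) X = ∑ x : Fin n → Fin M, wordProd A x * X * (wordProd A x)ᴴ := by
  induction n generalizing X with
  | zero => simp [wordProd_zero]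
  | succ n ih =>
    rw [pow_succ, Module.End.mul_apply, ih, cpMap_apply,
      ← (Fin.consEquiv fun _ => Fin M).sum_comp, Fintype.sum_prod_type, Finset.sum_comm]
    refine Finset.sum_congr rfl fun x _ => ?_
    change _ = ∑ i, wordProd A (Fin.cons i x) * X * (wordProd A (Fin.cons i x))ᴴ
    simp only [wordProd_cons, Matrix.conjTranspose_mul, Finset.mul_sum,
      Finset.sum_mul, Matrix.mul_assoc]

end CompletelyPositive

namespace IsIrredTuple

variable {M d : ℕ} {A : Fin M → Matrix (Fin d) (Fin d) ℝ}

theorem exists_ne_zero (hA : IsIrredTuple A) (hd : 2 ≤ d) : ∃ i, A i ≠ 0 := by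
  by_contra! hzero
  set e : Fin d → ℝ := Pi.single ⟨0, by omega⟩ 1
  have he : e ≠ 0 := by simp [e]
  refine hA ⟨ℝ ∙ e, fun i => by simp [hzero i], by simpa using he, fun htop => ?_⟩
  have := congrArg (fun U : Submodule ℝ (Fin d → ℝ) => Module.finrank ℝ U) htop
  simp only [finrank_span_singleton he, finrank_top, Module.finrank_fin_fun] at this
  omega

theorem iInf_ker_eq_bot (hA : IsIrredTuple A) (hd : 2 ≤ d) :
    ⨅ i, LinearMap.ker (A i).mulVecLin = ⊥ := by
  by_contra hne
  obtain ⟨i, hi⟩ := hA.exists_ne_zero hd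
  refine hA ⟨_, fun j => ?_, hne, fun htop => hi ?_⟩
  · rintro - ⟨u, hu, rfl⟩
    rw [LinearMap.mem_ker.1 ((Submodule.mem_iInf _).1 hu j)]
    exact zero_mem _
  · have : LinearMap.ker (A i).mulVecLin = ⊤ := top_le_iff.1 (htop ▸ iInf_le _ i)
    rw [LinearMap.ker_eq_top, ← Matrix.toLin'_apply'] at this
    exact Matrix.toLin'.map_eq_zero_iff.1 this

theorem exists_wordProd_mulVec_ne_zero (hA : IsIrredTuple A) (hd : 2 ≤ d) {v : Fin d → ℝ}
    (hv : v ≠ 0) (n : ℕ) : ∃ x : Fin n → Fin M, wordProd A x *ᵥ v ≠ 0 := by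
  induction n with
  | zero => exact ⟨Fin.elim0, by rwa [wordProd_zero, one_mulVec]⟩
  | succ n ih =>
    obtain ⟨x, hx⟩ := ih
    have : wordProd A x *ᵥ v ∉ ⨅ i, LinearMap.ker (A i).mulVecLin := by
      rw [hA.iInf_ker_eq_bot hd]; exact hx
    obtain ⟨i, hi⟩ : ∃ i, A i *ᵥ (wordProd A x *ᵥ v) ≠ 0 := by
      simpa [Submodule.mem_iInf] using this
    exact ⟨Fin.snoc x i, by rwa [wordProd_snoc, ← mulVec_mulVec]⟩

theorem exists_wordProd_ne_zero (hA : IsIrredTuple A) (hd : 2 ≤ d) (n : ℕ) :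
    ∃ x : Fin n → Fin M, wordProd A x ≠ 0 := by
  obtain ⟨x, hx⟩ := hA.exists_wordProd_mulVec_ne_zero hd (v := Pi.single ⟨0, by omega⟩ 1)
    (by simp) n
  exact ⟨x, fun h => hx (by rw [h, zero_mulVec])⟩

open scoped Matrix.Norms.L2Operator in
theorem exists_pos_mul_pow_le_sum_opNorm_sq (hA : IsIrredTuple A) (hd : 2 ≤ d) :
    ∃ c > 0, ∃ γ > 0, ∀ n, c * γ ^ n ≤ ∑ x : Fin n → Fin M, opNorm (wordProd A x) ^ 2 := by
  have hne : ∀ n, (cpMap A ^ n) 1 ≠ 0 := by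
    intro n h
    obtain ⟨x₀, hx₀⟩ := hA.exists_wordProd_ne_zero hd n
    have htrace := congrArg Matrix.trace h
    simp only [cpMap_pow_apply, Matrix.mul_one] at htrace
    rw [Matrix.trace_sum, Matrix.trace_zero, Finset.sum_eq_zero_iff_of_nonneg
      fun x _ => (posSemidef_self_mul_conjTranspose (wordProd A x)).trace_nonneg] at htrace
    exact hx₀ (trace_mul_conjTranspose_self_eq_zero_iff.1 (by simpa using htrace x₀))
  obtain ⟨c, hc, γ, hγ, hbound⟩ := (cpMap A).exists_pos_mul_pow_le_norm_pow_apply 1 hne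
  refine ⟨c, hc, γ, hγ, fun n => (hbound n).trans ?_⟩
  rw [cpMap_pow_apply]
  refine (norm_sum_le _ _).trans (Finset.sum_le_sum fun x _ => ?_)
  calc ‖wordProd A x * 1 * (wordProd A x)ᴴ‖ ≤ ‖wordProd A x‖ * ‖(wordProd A x)ᴴ‖ := by
        rw [Matrix.mul_one]; exact norm_mul_le _ _
    -- the L2 operator norm on matrices is `opNorm` by definition
    _ = opNorm (wordProd A x) ^ 2 := by rw [l2_opNorm_conjTranspose, sq]; rfl

theorem exists_pos_mul_pow_le_opNorm_wordProd (hA : IsIrredTuple A) (hd : 2 ≤ d) (hM : 0 < M) :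
    ∃ c > 0, ∃ β > 0, ∀ n, ∃ x : Fin n → Fin M, c * β ^ n ≤ opNorm (wordProd A x) := by
  obtain ⟨c, hc, γ, hγ, hsum⟩ := hA.exists_pos_mul_pow_le_sum_opNorm_sq hd
  have : NeZero M := ⟨hM.ne'⟩
  refine ⟨√c, Real.sqrt_pos.2 hc, √(γ / M), by positivity, fun n => ?_⟩
  have hmean : ∑ _x : Fin n → Fin M, c * (γ / M) ^ n ≤
      ∑ x : Fin n → Fin M, opNorm (wordProd A x) ^ 2 := by
    convert hsum n using 1
    simp only [Finset.sum_const, Finset.card_univ, Fintype.card_fun, Fintype.card_fin,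
      nsmul_eq_mul]
    push_cast
    rw [mul_left_comm, ← mul_pow, mul_div_cancel₀ γ (Nat.cast_ne_zero.2 hM.ne')]
  obtain ⟨x, -, hx⟩ := Finset.exists_le_of_sum_le Finset.univ_nonempty hmean
  refine ⟨x, (pow_le_pow_iff_left₀ (by positivity) (opNorm_nonneg _) two_ne_zero).1 ?_⟩
  rwa [mul_pow, ← pow_mul, mul_comm n, pow_mul, Real.sq_sqrt hc.le, Real.sq_sqrt (by positivity)]

end IsIrredTuple

theorem bot_lt_pressure_of_pos_mul_pow_le {M d : ℕ} {A : Fin M → Matrix (Fin d) (Fin d) ℝ}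
    {s c β : ℝ} (hc : 0 < c) (hβ : 0 < β)
    (h : ∀ n, c * β ^ n ≤ ∑ x : Fin n → Fin M, opNorm (wordProd A x) ^ s) :
    ⊥ < pressure A s := by
  refine (EReal.bot_lt_coe (min (Real.log c) 0 + Real.log β)).trans_le (le_iInf fun n => ?_)
  have hpos : 0 < ∑ x : Fin (n + 1) → Fin M, opNorm (wordProd A x) ^ s :=
    (by positivity : 0 < c * β ^ (n + 1)).trans_le (h _)
  rw [if_neg hpos.ne', EReal.coe_le_coe_iff, le_div_iff₀ (by positivity)]
  calc (min (Real.log c) 0 + Real.log β) * (n + 1) ≤ Real.log c + (n + 1) * Real.log β := by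
        nlinarith [min_le_left (Real.log c) 0, min_le_right (Real.log c) 0,
          mul_nonpos_of_nonpos_of_nonneg (min_le_right (Real.log c) 0) (Nat.cast_nonneg (α := ℝ) n)]
    _ = Real.log (c * β ^ (n + 1)) := by
        rw [Real.log_mul hc.ne' (by positivity), Real.log_pow]; push_cast; ring
    _ ≤ _ := Real.log_le_log (by positivity) (h _)

/-- the pressure of an irreducible tuple is finite. -/
theorem stmt_1 {M d : ℕ} (hM : 2 ≤ M) (hd : 2 ≤ d)
    (A : Fin M → Matrix (Fin d) (Fin d) ℝ) (hA : IsIrredTuple A) :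
    ∀ s : ℝ, 0 < s → ⊥ < pressure A s := by
  intro s hs
  obtain ⟨c, hc, β, hβ, hword⟩ := hA.exists_pos_mul_pow_le_opNorm_wordProd hd (by omega)
  refine bot_lt_pressure_of_pos_mul_pow_le (c := c ^ s) (β := β ^ s) (by positivity)
    (by positivity) fun n => ?_
  obtain ⟨x, hx⟩ := hword n
  calc c ^ s * (β ^ s) ^ n = (c * β ^ n) ^ s := by
        rw [Real.mul_rpow hc.le (by positivity), Real.rpow_pow_comm hβ.le]
    _ ≤ opNorm (wordProd A x) ^ s := Real.rpow_le_rpow (by positivity) hx hs.le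
    _ ≤ ∑ y, opNorm (wordProd A y) ^ s :=
        Finset.single_le_sum (fun y _ => Real.rpow_nonneg (opNorm_nonneg _) s) (Finset.mem_univ x)
end

section
/- Let M ≥ 2, let A = (A_1,…,A_M) be a tuple of d×d real matrices, let s > 0, and let μ be a σ-invariant Borel probability measure on Σ_M satisfying the Gibbs inequality for (A,s) with constants C > 0 and P ∈ ℝ. Then for every pair of Borel sets X, Y ⊆ Σ_M one has limsup_{n→∞} μ(X ∩ σ^{−n}Y) ≤ C⁴ μ(X) μ(Y). -/
open MeasureTheory Filter Topology

/-!
Submultiplicativity of the operator norm turns the two-sided Gibbs inequality into the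
quasi-Bernoulli bound `μ [w v] ≤ C³ μ [w] μ [v]`. Summing over words gives
`μ (T ∩ σ⁻ⁿ U) ≤ C³ μ T μ U` when `T` depends on the first `n` coordinates and `U` on finitely many;
both sides are finite measures in `U` and cylinder sets form a generating algebra, so `U` may be
any Borel set `Y`. Approximating `X` in measure by such a `T`, which depends only on the first `n`
coordinates once `n` is large, bounds the limsup by `C³ μ X μ Y`. Finally `C ≥ 1`, since some
one-letter cylinder has positive measure.
-/

open scoped ENNReal NNReal symmDiff

theorem ENNReal.le_of_forall_pos_le_add_mul {a b c : ℝ≥0∞} (hc : c ≠ ∞)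
    (h : ∀ δ : ℝ≥0, 0 < δ → a ≤ b + c * δ) : a ≤ b := by
  refine ENNReal.le_of_forall_pos_le_add fun ε hε _ => ?_
  lift c to ℝ≥0 using hc
  have hδ : 0 < ε / (c + 1) := div_pos hε (by positivity)
  refine (h _ hδ).trans (add_le_add_right ?_ b)
  rw [← ENNReal.coe_mul, ENNReal.coe_le_coe, mul_div_assoc', div_le_iff₀ (by positivity)]
  nlinarith [ε.2]

namespace MeasureTheory

theorem Measure.le_of_generateFrom_isSetAlgebra {α : Type*} [m : MeasurableSpace α]
    {ν ν' : Measure α} [IsFiniteMeasure ν] [IsFiniteMeasure ν'] {𝒜 : Set (Set α)}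
    (h𝒜 : IsSetAlgebra 𝒜) (hgen : m = MeasurableSpace.generateFrom 𝒜)
    (hle : ∀ t ∈ 𝒜, ν t ≤ ν' t) : ν ≤ ν' := by
  have hdense := Measure.MeasureDense.of_generateFrom_isSetAlgebra_finite (ν + ν') h𝒜 hgen
  refine Measure.le_iff.2 fun s hs => ENNReal.le_of_forall_pos_le_add fun ε hε _ => ?_
  obtain ⟨t, ht, -, hst⟩ := hdense.fin_meas_approx hs (measure_ne_top _ s) ε hε
  rw [ENNReal.ofReal_coe_nnreal, Measure.add_apply] at hst
  calc ν s ≤ ν t + ν (s ∆ t) := tsub_le_iff_left.1 le_measure_symmDiff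
    _ ≤ ν' t + ν (s ∆ t) := add_le_add_left (hle t ht) _
    _ ≤ ν' s + ν' (t ∆ s) + ν (s ∆ t) := by gcongr; exact tsub_le_iff_left.1 le_measure_symmDiff
    _ = ν' s + (ν (s ∆ t) + ν' (s ∆ t)) := by rw [symmDiff_comm]; ring
    _ ≤ ν' s + ε := by gcongr

theorem limsup_measure_inter_le_of_measureDense {α : Type*} [MeasurableSpace α]
    {μ : Measure α} [IsFiniteMeasure μ] {𝒜 : Set (Set α)} (h𝒜 : μ.MeasureDense 𝒜)
    {Y : ℕ → Set α} {K c : ℝ≥0∞} (hK : K ≠ ∞) (hc : c ≠ ∞)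
    (hbound : ∀ t ∈ 𝒜, ∀ᶠ n in atTop, μ (t ∩ Y n) ≤ K * (μ t * c))
    {s : Set α} (hs : MeasurableSet s) :
    limsup (fun n => μ (s ∩ Y n)) atTop ≤ K * (μ s * c) := by
  refine ENNReal.le_of_forall_pos_le_add_mul (c := K * c + 1) (by finiteness) fun δ hδ => ?_
  obtain ⟨t, ht, -, hst⟩ := h𝒜.fin_meas_approx hs (measure_ne_top _ s) δ hδ
  rw [ENNReal.ofReal_coe_nnreal] at hst
  have hts : μ t ≤ μ s + δ :=
    (tsub_le_iff_left.1 le_measure_symmDiff).trans (by rw [symmDiff_comm]; gcongr)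
  have hsdiff : μ (s \ t) ≤ δ := (measure_mono fun x hx => Or.inl hx).trans hst.le
  refine limsup_le_of_le (by isBoundedDefault) ((hbound t ht).mono fun n hn => ?_)
  calc μ (s ∩ Y n) ≤ μ (t ∩ Y n) + μ (s \ t) :=
        (measure_mono fun x hx => by by_cases hxt : x ∈ t <;> simp_all).trans
          (measure_union_le _ _)
    _ ≤ K * ((μ s + δ) * c) + δ := by gcongr; exact hn.trans (by gcongr)
    _ = K * (μ s * c) + (K * c + 1) * δ := by ring

end MeasureTheory

section SymbolicSpace
variable {M : ℕ}

def prefixWord (n : ℕ) (y : ℕ → Fin M) : Fin n → Fin M := fun i => y i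

theorem measurable_prefixWord (n : ℕ) : Measurable (prefixWord (M := M) n) :=
  measurable_pi_lambda _ fun _ => measurable_pi_apply _

theorem measurable_shift : Measurable (shift (M := M)) :=
  measurable_pi_lambda _ fun _ => measurable_pi_apply _

theorem shift_iterate_apply (n : ℕ) (y : ℕ → Fin M) (i : ℕ) : shift^[n] y i = y (i + n) := by
  induction n generalizing y with
  | zero => rfl
  | succ n ih => rw [Function.iterate_succ_apply, ih]; rfl

theorem mem_cyl {w : List (Fin M)} {y : ℕ → Fin M} :
    y ∈ cyl w ↔ ∀ i (h : i < w.length), y i = w[i] :=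
  ⟨fun hy i h => hy ⟨i, h⟩, fun hy i => hy i i.isLt⟩

theorem cyl_ofFn {n : ℕ} (g : Fin n → Fin M) : cyl (List.ofFn g) = prefixWord n ⁻¹' {g} := by
  ext y
  simp only [mem_cyl, List.length_ofFn, List.getElem_ofFn, Set.mem_preimage,
    Set.mem_singleton_iff, funext_iff, Fin.forall_iff, prefixWord]

theorem cyl_append (w v : List (Fin M)) :
    cyl (w ++ v) = cyl w ∩ shift^[w.length] ⁻¹' cyl v := by
  ext y
  simp only [Set.mem_inter_iff, Set.mem_preimage, mem_cyl, List.length_append, shift_iterate_apply]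
  constructor
  · intro h
    refine ⟨fun i hi => ?_, fun i hi => ?_⟩
    · rw [h i (by omega), List.getElem_append_left hi]
    · rw [h (i + w.length) (by omega), List.getElem_append_right (by omega)]
      simp
  · rintro ⟨hw, hv⟩ i hi
    by_cases hiw : i < w.length
    · rw [List.getElem_append_left hiw, hw i hiw]
    · rw [List.getElem_append_right (by omega), ← hv (i - w.length) (by omega)]
      congr 1
      omega

theorem measure_prefixWord_preimage (μ : Measure (ℕ → Fin M)) {n : ℕ}
    (S : Set (Fin n → Fin M)) :
    μ (prefixWord n ⁻¹' S) = ∑ g ∈ S.toFinite.toFinset, μ (cyl (List.ofFn g)) := by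
  simp only [cyl_ofFn]
  rw [sum_measure_preimage_singleton _
    fun g _ => measurable_prefixWord n (measurableSet_singleton g), Set.Finite.coe_toFinset]

theorem prefixWord_preimage_eq_of_le {m n : ℕ} (h : m ≤ n) (S : Set (Fin m → Fin M)) :
    prefixWord m ⁻¹' S =
      prefixWord n ⁻¹' ((fun g : Fin n → Fin M => fun i => g (Fin.castLE h i)) ⁻¹' S) :=
  rfl

-- Indexed by `n + 1` because the Gibbs inequality says nothing about the empty word.
def cylinderAlgebra (M : ℕ) : Set (Set (ℕ → Fin M)) :=
  {E | ∃ n : ℕ, ∃ S : Set (Fin (n + 1) → Fin M), E = prefixWord (n + 1) ⁻¹' S}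

theorem isSetAlgebra_cylinderAlgebra : IsSetAlgebra (cylinderAlgebra M) where
  empty_mem := ⟨0, ∅, rfl⟩
  compl_mem := by
    rintro _ ⟨n, S, rfl⟩
    exact ⟨n, Sᶜ, rfl⟩
  union_mem := by
    rintro _ _ ⟨m, S, rfl⟩ ⟨n, T, rfl⟩
    rcases le_total m n with h | h
    · rw [prefixWord_preimage_eq_of_le (Nat.succ_le_succ h) S, ← Set.preimage_union]
      exact ⟨n, _, rfl⟩
    · rw [prefixWord_preimage_eq_of_le (Nat.succ_le_succ h) T, ← Set.preimage_union]
      exact ⟨m, _, rfl⟩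

theorem generateFrom_cylinderAlgebra :
    (MeasurableSpace.pi : MeasurableSpace (ℕ → Fin M)) =
      MeasurableSpace.generateFrom (cylinderAlgebra M) := by
  refine le_antisymm (iSup_le fun i => ?_) (MeasurableSpace.generateFrom_le ?_)
  · rw [MeasurableSpace.comap_le_iff_le_map]
    intro s _
    exact MeasurableSpace.measurableSet_generateFrom
      ⟨i, {g | g (Fin.last i) ∈ s}, rfl⟩
  · rintro _ ⟨n, S, rfl⟩
    exact measurable_prefixWord _ (Set.toFinite S).measurableSet

end SymbolicSpace

theorem opNorm_nonneg_s3 {d : ℕ} (X : Matrix (Fin d) (Fin d) ℝ) : 0 ≤ opNorm X :=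
  norm_nonneg _

theorem opNorm_mul_le {d : ℕ} (X Y : Matrix (Fin d) (Fin d) ℝ) :
    opNorm (X * Y) ≤ opNorm X * opNorm Y := by
  simpa only [opNorm, map_mul] using norm_mul_le _ _

theorem listProd_append {M d : ℕ} (A : Fin M → Matrix (Fin d) (Fin d) ℝ) (w v : List (Fin M)) :
    listProd A (w ++ v) = listProd A v * listProd A w := by
  simp only [listProd, List.map_append, List.reverse_append, List.prod_append]

theorem exp_mul_opNorm_listProd_rpow_append_le {M d : ℕ} (A : Fin M → Matrix (Fin d) (Fin d) ℝ)
    {s : ℝ} (hs : 0 ≤ s) (P : ℝ) (w v : List (Fin M)) :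
    Real.exp (-((w ++ v).length : ℝ) * P) * opNorm (listProd A (w ++ v)) ^ s ≤
      (Real.exp (-(w.length : ℝ) * P) * opNorm (listProd A w) ^ s) *
        (Real.exp (-(v.length : ℝ) * P) * opNorm (listProd A v) ^ s) := by
  have hexp : Real.exp (-((w ++ v).length : ℝ) * P) =
      Real.exp (-(w.length : ℝ) * P) * Real.exp (-(v.length : ℝ) * P) := by
    rw [← Real.exp_add, List.length_append]
    push_cast
    ring_nf
  have hnorm : opNorm (listProd A (w ++ v)) ^ s ≤
      opNorm (listProd A w) ^ s * opNorm (listProd A v) ^ s := by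
    rw [← Real.mul_rpow (opNorm_nonneg_s3 _) (opNorm_nonneg_s3 _), listProd_append, mul_comm (opNorm _)]
    exact Real.rpow_le_rpow (opNorm_nonneg_s3 _) (opNorm_mul_le _ _) hs
  rw [hexp, mul_mul_mul_comm]
  gcongr

namespace IsGibbs
variable {M d : ℕ} {A : Fin M → Matrix (Fin d) (Fin d) ℝ} {s C P : ℝ}
  {μ : Measure (ℕ → Fin M)}

theorem measure_cyl_append_le [IsFiniteMeasure μ] (hG : IsGibbs A s C P μ) (hs : 0 ≤ s)
    (hC : 0 < C) {w v : List (Fin M)} (hw : w ≠ []) (hv : v ≠ []) :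
    μ (cyl (w ++ v)) ≤ ENNReal.ofReal (C ^ 3) * (μ (cyl w) * μ (cyl v)) := by
  have hwv := (hG (w ++ v) (by simp [hw])).1
  have key : (μ (cyl (w ++ v))).toReal ≤
      C ^ 3 * ((μ (cyl w)).toReal * (μ (cyl v)).toReal) :=
    calc (μ (cyl (w ++ v))).toReal = C * (C⁻¹ * (μ (cyl (w ++ v))).toReal) := by field_simp
      _ ≤ C * ((Real.exp (-(w.length : ℝ) * P) * opNorm (listProd A w) ^ s) *
            (Real.exp (-(v.length : ℝ) * P) * opNorm (listProd A v) ^ s)) := by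
        refine mul_le_mul_of_nonneg_left ?_ hC.le
        exact hwv.trans (exp_mul_opNorm_listProd_rpow_append_le A hs P w v)
      _ ≤ C * ((C * (μ (cyl w)).toReal) * (C * (μ (cyl v)).toReal)) := by
        refine mul_le_mul_of_nonneg_left (mul_le_mul (hG w hw).2 (hG v hv).2 ?_ ?_) hC.le
        · exact mul_nonneg (Real.exp_pos _).le (Real.rpow_nonneg (opNorm_nonneg_s3 _) _)
        · positivity
      _ = C ^ 3 * ((μ (cyl w)).toReal * (μ (cyl v)).toReal) := by ring
  rw [← ENNReal.ofReal_toReal (measure_ne_top μ (cyl w)),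
    ← ENNReal.ofReal_toReal (measure_ne_top μ (cyl v)), ← ENNReal.ofReal_mul (by positivity),
    ← ENNReal.ofReal_mul (by positivity)]
  exact (ENNReal.le_ofReal_iff_toReal_le (measure_ne_top _ _) (by positivity)).2 key

theorem one_le [IsProbabilityMeasure μ] (hG : IsGibbs A s C P μ) (hC : 0 < C) : 1 ≤ C := by
  obtain ⟨g, -, hg⟩ : ∃ g ∈ (Set.univ : Set (Fin 1 → Fin M)).toFinite.toFinset,
      μ (cyl (List.ofFn g)) ≠ 0 := by
    refine Finset.exists_ne_zero_of_sum_ne_zero ?_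
    rw [← measure_prefixWord_preimage, Set.preimage_univ, measure_univ]
    exact one_ne_zero
  have hpos : 0 < (μ (cyl (List.ofFn g))).toReal := ENNReal.toReal_pos hg (measure_ne_top _ _)
  have h := hG (List.ofFn g) (by simp)
  have hinv : C⁻¹ ≤ C := le_of_mul_le_mul_right (h.1.trans h.2) hpos
  nlinarith [inv_mul_cancel₀ hC.ne', inv_pos.2 hC]

theorem measure_prefixWord_inter_shift_preimage_prefixWord_le [IsFiniteMeasure μ]
    (hG : IsGibbs A s C P μ) (hs : 0 ≤ s) (hC : 0 < C) {m n : ℕ} (hm : 0 < m) (hn : 0 < n)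
    (S : Set (Fin m → Fin M)) (T : Set (Fin n → Fin M)) :
    μ (prefixWord m ⁻¹' S ∩ shift^[m] ⁻¹' (prefixWord n ⁻¹' T)) ≤
      ENNReal.ofReal (C ^ 3) * (μ (prefixWord m ⁻¹' S) * μ (prefixWord n ⁻¹' T)) := by
  have hsub : prefixWord m ⁻¹' S ∩ shift^[m] ⁻¹' (prefixWord n ⁻¹' T) ⊆
      ⋃ g ∈ S.toFinite.toFinset, ⋃ h ∈ T.toFinite.toFinset, cyl (List.ofFn g ++ List.ofFn h) := by
    rintro y ⟨hyS, hyT⟩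
    simp only [Set.mem_iUnion, Set.Finite.mem_toFinset, cyl_append, List.length_ofFn, cyl_ofFn]
    exact ⟨_, hyS, _, hyT, rfl, rfl⟩
  calc _ ≤ ∑ g ∈ S.toFinite.toFinset, ∑ h ∈ T.toFinite.toFinset,
          μ (cyl (List.ofFn g ++ List.ofFn h)) :=
        (measure_mono hsub).trans <| (measure_biUnion_finset_le _ _).trans <|
          Finset.sum_le_sum fun g _ => measure_biUnion_finset_le _ _
    _ ≤ ∑ g ∈ S.toFinite.toFinset, ∑ h ∈ T.toFinite.toFinset,
          ENNReal.ofReal (C ^ 3) * (μ (cyl (List.ofFn g)) * μ (cyl (List.ofFn h))) := by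
        gcongr with g _ h _
        exact hG.measure_cyl_append_le hs hC (by simpa using hm.ne') (by simpa using hn.ne')
    _ = _ := by
        simp_rw [measure_prefixWord_preimage, Finset.sum_mul_sum, Finset.mul_sum]

theorem measure_prefixWord_inter_shift_preimage_le [IsFiniteMeasure μ] (hG : IsGibbs A s C P μ)
    (hs : 0 ≤ s) (hC : 0 < C) {n : ℕ} (hn : 0 < n) (S : Set (Fin n → Fin M))
    {Y : Set (ℕ → Fin M)} (hY : MeasurableSet Y) :
    μ (prefixWord n ⁻¹' S ∩ shift^[n] ⁻¹' Y) ≤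
      ENNReal.ofReal (C ^ 3) * (μ (prefixWord n ⁻¹' S) * μ Y) := by
  have hσ : Measurable (shift (M := M))^[n] := measurable_shift.iterate n
  have hle : (μ.restrict (prefixWord n ⁻¹' S)).map shift^[n] ≤
      (ENNReal.ofReal (C ^ 3) * μ (prefixWord n ⁻¹' S)) • μ := by
    have : IsFiniteMeasure ((ENNReal.ofReal (C ^ 3) * μ (prefixWord n ⁻¹' S)) • μ) :=
      ⟨by simp [ENNReal.mul_lt_top_iff, measure_lt_top]⟩
    refine Measure.le_of_generateFrom_isSetAlgebra isSetAlgebra_cylinderAlgebra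
      generateFrom_cylinderAlgebra ?_
    rintro _ ⟨m, T, rfl⟩
    rw [Measure.map_apply hσ (measurable_prefixWord _ T.toFinite.measurableSet),
      Measure.restrict_apply (hσ (measurable_prefixWord _ T.toFinite.measurableSet)),
      Set.inter_comm, Measure.smul_apply, smul_eq_mul, mul_assoc]
    exact measure_prefixWord_inter_shift_preimage_prefixWord_le hG hs hC hn m.succ_pos S T
  have hY' := hle Y
  rwa [Measure.map_apply hσ hY, Measure.restrict_apply (hσ hY), Set.inter_comm,
    Measure.smul_apply, smul_eq_mul, mul_assoc] at hY'

theorem limsup_measure_inter_shift_preimage_le [IsFiniteMeasure μ] (hG : IsGibbs A s C P μ)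
    (hs : 0 ≤ s) (hC : 0 < C) {X Y : Set (ℕ → Fin M)} (hX : MeasurableSet X)
    (hY : MeasurableSet Y) :
    limsup (fun n => μ (X ∩ shift^[n] ⁻¹' Y)) atTop ≤
      ENNReal.ofReal (C ^ 3) * (μ X * μ Y) := by
  refine limsup_measure_inter_le_of_measureDense
    (Measure.MeasureDense.of_generateFrom_isSetAlgebra_finite μ isSetAlgebra_cylinderAlgebra
      generateFrom_cylinderAlgebra) ENNReal.ofReal_ne_top (measure_ne_top μ Y) ?_ hX
  rintro _ ⟨k, S, rfl⟩
  filter_upwards [eventually_ge_atTop (k + 1)] with n hn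
  rw [prefixWord_preimage_eq_of_le hn S]
  exact measure_prefixWord_inter_shift_preimage_le hG hs hC (by omega) _ hY

end IsGibbs

theorem stmt_3_general {M d : ℕ}
    (A : Fin M → Matrix (Fin d) (Fin d) ℝ) (s : ℝ) (hs : 0 < s)
    (μ : Measure (ℕ → Fin M)) [IsProbabilityMeasure μ]
    (C P : ℝ) (hC : 0 < C) (hG : IsGibbs A s C P μ) :
    ∀ X Y : Set (ℕ → Fin M), MeasurableSet X → MeasurableSet Y →
      Filter.limsup (fun n : ℕ => μ (X ∩ shift^[n] ⁻¹' Y)) Filter.atTop ≤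
        ENNReal.ofReal (C ^ 4) * (μ X * μ Y) := by
  intro X Y hX hY
  calc _ ≤ ENNReal.ofReal (C ^ 3) * (μ X * μ Y) :=
        hG.limsup_measure_inter_shift_preimage_le hs.le hC hX hY
    _ ≤ ENNReal.ofReal (C ^ 4) * (μ X * μ Y) := by
        gcongr ?_ * _
        exact ENNReal.ofReal_le_ofReal (pow_le_pow_right₀ (hG.one_le hC) (by norm_num))

/-- the limsup inequality for Gibbs measures. -/
theorem stmt_3 {M d : ℕ} (hM : 2 ≤ M)
    (A : Fin M → Matrix (Fin d) (Fin d) ℝ) (s : ℝ) (hs : 0 < s)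
    (μ : Measure (ℕ → Fin M)) [IsProbabilityMeasure μ]
    (hinv : MeasurePreserving (shift (M := M)) μ μ)
    (C P : ℝ) (hC : 0 < C) (hG : IsGibbs A s C P μ) :
    ∀ X Y : Set (ℕ → Fin M), MeasurableSet X → MeasurableSet Y →
      Filter.limsup (fun n : ℕ => μ (X ∩ shift^[n] ⁻¹' Y)) Filter.atTop ≤
        ENNReal.ofReal (C ^ 4) * (μ X * μ Y) :=
  stmt_3_general A s hs μ C P hC hG
end

section
/- Let M ≥ 2, d ≥ 2, let A = (A_1,…,A_M) be an irreducible tuple of d×d real matrices, let s > 0, and let μ be a σ-invariant Borel probability measure on Σ_M satisfying the Gibbs inequality for (A,s) with some constants C > 0 and P ∈ ℝ. Suppose there exists ω ∈ Σ_M with σ^n ω = ω, where n ≥ 1 is the least period of ω, such that μ = (1/n) Σ_{i=0}^{n−1} δ_{σ^i ω} is the uniform measure on the orbit of ω. Then n divides d, and writing r = d/n there exist linear subspaces R_1,…,R_n of ℝ^d, each of dimension r, such that ℝ^d is the internal direct sum R_1 ⊕ ⋯ ⊕ R_n, A_i R_j = {0} whenever i ≠ ω_j, A_{ω_j} R_j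 = R_{j+1} for 1 ≤ j < n and A_{ω_n} R_n = R_1, for each i = 1,…,n the product A_{ω_{i−1}}⋯A_{ω_1}A_{ω_n}⋯A_{ω_i} maps R_i bijectively onto itself, and A_{x_n}⋯A_{x_1} ≠ 0 if and only if (x_1,…,x_n) is a cyclic permutation of (ω_1,…,ω_n). -/
open MeasureTheory Filter Topology

namespace Stmt9

variable {M d : ℕ} (A : Fin M → Matrix (Fin d) (Fin d) ℝ)

lemma listProd_nil : listProd A [] = 1 := rfl

lemma listProd_append (u v : List (Fin M)) :
    listProd A (u ++ v) = listProd A v * listProd A u := by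
  simp [listProd, List.reverse_append]

lemma listProd_singleton (a : Fin M) : listProd A [a] = A a := by
  simp [listProd]

lemma listProd_concat (w : List (Fin M)) (a : Fin M) :
    listProd A (w ++ [a]) = A a * listProd A w := by
  rw [listProd_append, listProd_singleton]

/-- the segment `ω_j, ω_{j+1}, …, ω_{j+m-1}` -/
def seg (ω : ℕ → Fin M) (j m : ℕ) : List (Fin M) :=
  List.ofFn (fun k : Fin m => ω (j + k))

@[simp] lemma seg_length (ω : ℕ → Fin M) (j m : ℕ) : (seg ω j m).length = m := by
  simp [seg]

lemma seg_getElem (ω : ℕ → Fin M) (j m : ℕ) (i : ℕ) (h : i < (seg ω j m).length) :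
    (seg ω j m)[i] = ω (j + i) := by
  simp [seg]

lemma seg_succ (ω : ℕ → Fin M) (j m : ℕ) :
    seg ω j (m + 1) = seg ω j m ++ [ω (j + m)] := by
  rw [seg, List.ofFn_succ']
  simp [seg, List.concat_eq_append, Fin.last]

lemma listProd_seg_add (ω : ℕ → Fin M) (j a b : ℕ) :
    listProd A (seg ω j (a + b)) = listProd A (seg ω (j + a) b) * listProd A (seg ω j a) := by
  induction b with
  | zero => simp [seg, listProd]
  | succ b ih =>
      rw [show a + (b + 1) = (a + b) + 1 from rfl, seg_succ, listProd_concat, ih,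
        seg_succ, listProd_concat, mul_assoc, show j + (a + b) = j + a + b by omega]


section Periodic

variable {n : ℕ} {ω : ℕ → Fin M} (hp : ∀ k, ω (k + n) = ω k)

include hp in
lemma omega_add_mul (k N : ℕ) : ω (k + N * n) = ω k := by
  induction N with
  | zero => simp
  | succ N ih => rw [show k + (N + 1) * n = (k + N * n) + n by ring, hp, ih]

include hp in
lemma omega_mod (k : ℕ) : ω k = ω (k % n) := by
  conv_lhs => rw [show k = k % n + (k / n) * n from (Nat.mod_add_div' k n).symm]
  rw [omega_add_mul hp]

include hp in
lemma omega_congr {a b : ℕ} (h : a % n = b % n) : ω a = ω b := by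
  rw [omega_mod hp a, omega_mod hp b, h]

include hp in
lemma seg_congr {a b : ℕ} (h : a % n = b % n) (m : ℕ) : seg ω a m = seg ω b m := by
  unfold seg
  congr 1
  funext k
  exact omega_congr hp (by rw [Nat.add_mod, h, ← Nat.add_mod])

end Periodic

section LinAlg

lemma mulVecLin_pow (X : Matrix (Fin d) (Fin d) ℝ) (k : ℕ) :
    (X ^ k).mulVecLin = (X.mulVecLin) ^ k := by
  induction k with
  | zero => simp [Matrix.mulVecLin_one]; rfl
  | succ k ih => rw [pow_succ, pow_succ, Matrix.mulVecLin_mul, ih]; rfl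

lemma range_pow_stab (g : Module.End ℝ (Fin d → ℝ)) (k : ℕ) :
    LinearMap.range (g ^ (d + k)) = LinearMap.range (g ^ d) := by
  have hfr : Module.finrank ℝ (Fin d → ℝ) = d := by
    simp [Module.finrank_pi]
  have hle : LinearMap.range (g ^ (d + k)) ≤ LinearMap.range (g ^ d) := by
    rw [pow_add]
    exact LinearMap.range_comp_le_range _ _
  have hker : LinearMap.ker (g ^ (d + k)) = LinearMap.ker (g ^ d) := by
    rw [Module.End.ker_pow_eq_ker_pow_finrank_of_le (by omega),
      Module.End.ker_pow_eq_ker_pow_finrank_of_le (by omega), hfr]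
  have h1 := LinearMap.finrank_range_add_finrank_ker (g ^ (d + k))
  have h2 := LinearMap.finrank_range_add_finrank_ker (g ^ d)
  rw [hker] at h1
  exact Submodule.eq_of_le_of_finrank_le hle (by omega)

lemma restrict_surj_inj (g : Module.End ℝ (Fin d → ℝ)) (p : Submodule ℝ (Fin d → ℝ))
    (hmap : p.map g = p) : ∀ x ∈ p, g x = 0 → x = 0 := by
  have hmem : ∀ x ∈ p, g x ∈ p := fun x hx => hmap ▸ Submodule.mem_map_of_mem hx
  set g' : p →ₗ[ℝ] p := g.restrict hmem with hg'
  have hsurj : Function.Surjective g' := by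
    rintro ⟨y, hy⟩
    rw [← hmap] at hy
    obtain ⟨x, hx, hxy⟩ := hy
    exact ⟨⟨x, hx⟩, Subtype.ext hxy⟩
  have hinj : Function.Injective g' := (LinearMap.injective_iff_surjective).2 hsurj
  intro x hx hgx
  have : g' ⟨x, hx⟩ = g' 0 := by
    apply Subtype.ext
    simpa [hg', LinearMap.restrict_apply] using hgx
  simpa using hinj this

lemma finrank_map_of_injOn (f : (Fin d → ℝ) →ₗ[ℝ] (Fin d → ℝ)) (p : Submodule ℝ (Fin d → ℝ))
    (h : ∀ x ∈ p, f x = 0 → x = 0) :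
    Module.finrank ℝ (p.map f) = Module.finrank ℝ p := by
  have h1 := LinearMap.finrank_range_add_finrank_ker (f.domRestrict p)
  rw [LinearMap.range_domRestrict] at h1
  have hker : LinearMap.ker (f.domRestrict p) = ⊥ := by
    rw [LinearMap.ker_eq_bot']
    rintro ⟨x, hx⟩ hfx
    apply Subtype.ext
    exact h x hx (by simpa using hfx)
  rw [hker] at h1
  simpa using h1

lemma mulVecLin_eq_zero {X : Matrix (Fin d) (Fin d) ℝ} (h : X.mulVecLin = 0) : X = 0 := by
  ext i j
  have := congrFun (congrArg (fun f => f.toFun) h) (Pi.single j 1)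
  simp [Matrix.mulVecLin_apply, Matrix.mulVec_single] at this
  exact congrFun this i

end LinAlg

lemma seg_one (ω : ℕ → Fin M) (j : ℕ) : seg ω j 1 = [ω j] := by
  simp [seg]

lemma wordProd_eq_listProd {m : ℕ} (x : Fin m → Fin M) :
    wordProd A x = listProd A (List.ofFn x) := by
  unfold wordProd listProd
  rw [List.map_ofFn]
  rfl


section MeasureLayer

variable {M : ℕ}

lemma shift_iterate (l : ℕ) : ∀ x : ℕ → Fin M, shift^[l] x = fun m => x (m + l) := by
  induction l with
  | zero => intro x; simp
  | succ l ih =>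
      intro x
      funext m
      rw [Function.iterate_succ_apply, ih (shift x)]
      rfl

lemma mem_cyl_iff (w : List (Fin M)) (x : ℕ → Fin M) :
    x ∈ cyl w ↔ ∀ m (hm : m < w.length), x m = w[m] := by
  constructor
  · intro h m hm
    simpa using h ⟨m, hm⟩
  · intro h i
    simpa [List.get_eq_getElem] using h i.val i.isLt

lemma cyl_measurable (w : List (Fin M)) : MeasurableSet (cyl w) := by
  have : cyl w = ⋂ i : Fin w.length, (fun y : ℕ → Fin M => y (i : ℕ)) ⁻¹' {w.get i} := by
    ext y
    simp only [Set.mem_iInter, Set.mem_preimage, Set.mem_singleton_iff]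
    exact Iff.rfl
  rw [this]
  exact MeasurableSet.iInter fun i => (measurable_pi_apply _) (measurableSet_singleton _)

lemma mu_cyl_zero_iff {n : ℕ} (hn : 0 < n) (ω : ℕ → Fin M) (μ : Measure (ℕ → Fin M))
    (hμ : μ = ((n : ENNReal))⁻¹ • ∑ i ∈ Finset.range n, Measure.dirac (shift^[i] ω))
    (w : List (Fin M)) :
    μ (cyl w) = 0 ↔ ∀ l < n, shift^[l] ω ∉ cyl w := by
  rw [hμ]
  have hsum : ((∑ i ∈ Finset.range n, Measure.dirac (shift^[i] ω)) (cyl w))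
      = ∑ i ∈ Finset.range n, Measure.dirac (shift^[i] ω) (cyl w) := by
    rw [Measure.coe_finset_sum]
    simp
  rw [Measure.smul_apply, smul_eq_mul, hsum]
  have hinv : ((n : ENNReal))⁻¹ ≠ 0 := by
    simp [ENNReal.inv_ne_zero]
  rw [mul_eq_zero]
  simp only [hinv, false_or]
  rw [Finset.sum_eq_zero_iff]
  constructor
  · intro h l hl hmem
    have := h l (Finset.mem_range.mpr hl)
    rw [Measure.dirac_apply' _ (cyl_measurable w)] at this
    simp [Set.indicator_apply, hmem] at this
  · intro h i hi
    rw [Measure.dirac_apply' _ (cyl_measurable w)]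
    simp [Set.indicator_apply, h i (Finset.mem_range.mp hi)]

lemma gibbs_zero_iff {d : ℕ} (A : Fin M → Matrix (Fin d) (Fin d) ℝ) (s C P : ℝ)
    (μ : Measure (ℕ → Fin M)) [IsProbabilityMeasure μ]
    (hs : 0 < s) (hC : 0 < C) (hG : IsGibbs A s C P μ)
    (w : List (Fin M)) (hw : w ≠ []) :
    listProd A w = 0 ↔ μ (cyl w) = 0 := by
  obtain ⟨h1, h2⟩ := hG w hw
  constructor
  · intro h0
    rw [h0] at h1
    have hop : opNorm (0 : Matrix (Fin d) (Fin d) ℝ) = 0 := by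
      rw [opNorm, map_zero, norm_zero]
    rw [hop, Real.zero_rpow hs.ne', mul_zero] at h1
    have htr : (μ (cyl w)).toReal = 0 := by
      nlinarith [ENNReal.toReal_nonneg (a := μ (cyl w)), inv_pos.mpr hC]
    rcases (ENNReal.toReal_eq_zero_iff _).1 htr with h | h
    · exact h
    · exact absurd h (measure_ne_top μ _)
  · intro h0
    have htr : (μ (cyl w)).toReal = 0 := by rw [h0]; simp
    rw [htr, mul_zero] at h2
    have hexp := Real.exp_pos (-(w.length : ℝ) * P)
    have hrp : opNorm (listProd A w) ^ s ≤ 0 := by nlinarith [Real.rpow_nonneg (norm_nonneg (Matrix.toEuclideanCLM (𝕜 := ℝ) (listProd A w))) s]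
    have hrp0 : opNorm (listProd A w) ^ s = 0 :=
      le_antisymm hrp (Real.rpow_nonneg (norm_nonneg _) s)
    have hop0 : opNorm (listProd A w) = 0 :=
      ((Real.rpow_eq_zero_iff_of_nonneg (norm_nonneg _)).1 hrp0).1
    have h0' : Matrix.toEuclideanCLM (𝕜 := ℝ) (listProd A w) = 0 := norm_eq_zero.mp hop0
    exact EquivLike.injective (Matrix.toEuclideanCLM (𝕜 := ℝ)) (by rw [h0', map_zero])

end MeasureLayer

end Stmt9



/-- if the Gibbs measure of an irreducible tuple is the uniform measure on a
periodic orbit of least period `n`, then `n ∣ d` and the degenerate algebraic structure of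
Theorem 3.1(iii) holds with `r = d / n`. -/
theorem stmt_9 {M d : ℕ} (hM : 2 ≤ M) (hd : 2 ≤ d)
    (A : Fin M → Matrix (Fin d) (Fin d) ℝ) (hA : IsIrredTuple A)
    (s : ℝ) (hs : 0 < s)
    (μ : Measure (ℕ → Fin M)) [IsProbabilityMeasure μ]
    (hinv : MeasurePreserving (shift (M := M)) μ μ)
    (C P : ℝ) (hC : 0 < C) (hG : IsGibbs A s C P μ)
    (n : ℕ) [NeZero n] (ω : ℕ → Fin M)
    (hper : shift^[n] ω = ω)
    (hleast : ∀ m : ℕ, 0 < m → m < n → shift^[m] ω ≠ ω)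
    (hμ : μ = ((n : ENNReal))⁻¹ • ∑ i ∈ Finset.range n, Measure.dirac (shift^[i] ω)) :
    n ∣ d ∧
    ∃ R : Fin n → Submodule ℝ (Fin d → ℝ),
      (∀ j, Module.finrank ℝ (R j) = d / n) ∧
      DirectSum.IsInternal R ∧
      (∀ (i : Fin M) (j : Fin n), i ≠ ω (j : ℕ) → (R j).map (A i).mulVecLin = ⊥) ∧
      (∀ j : Fin n, (R j).map (A (ω (j : ℕ))).mulVecLin = R (j + 1)) ∧
      (∀ i : Fin n,
        Set.BijOn (fun v => (wordProd A (fun k : Fin n => ω ((i + k : Fin n) : ℕ))).mulVec v)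
          (R i : Set (Fin d → ℝ)) (R i : Set (Fin d → ℝ))) ∧
      (∀ x : Fin n → Fin M,
        wordProd A x ≠ 0 ↔ ∃ i : Fin n, ∀ k : Fin n, x k = ω ((i + k : Fin n) : ℕ)) := by
  classical
  have hn : 0 < n := Nat.pos_of_ne_zero (NeZero.ne n)
  have hd0 : 0 < d := by omega
  have hfrtot : Module.finrank ℝ (Fin d → ℝ) = d := by simp [Module.finrank_pi]
  have hp : ∀ k, ω (k + n) = ω k := by
    intro k
    have := congrFun hper k
    rwa [Stmt9.shift_iterate n ω] at this
  have hmodadd : ∀ a b : ℕ, (a + b % n) % n = (a + b) % n := by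
    intro a b
    rw [Nat.add_mod, Nat.mod_mod_of_dvd _ dvd_rfl, ← Nat.add_mod]
  -- least period machinery
  have hiter_mul : ∀ t, shift^[n * t] ω = ω := by
    intro t
    induction t with
    | zero => simp
    | succ t ih => rw [Nat.mul_succ, Function.iterate_add_apply, hper, ih]
  have hmod0 : ∀ t, shift^[t] ω = ω → t % n = 0 := by
    intro t ht
    by_contra h0
    apply hleast (t % n) (Nat.pos_of_ne_zero h0) (Nat.mod_lt _ hn)
    have h1 : shift^[t % n + n * (t / n)] ω = ω := by
      rw [Nat.mod_add_div t n, ht]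
    rwa [Function.iterate_add_apply, hiter_mul] at h1
  have hcongle : ∀ a b, a ≤ b → (∀ m, m < n → ω (a + m) = ω (b + m)) → a % n = b % n := by
    intro a b hab h
    have hall : ∀ m, ω (a + m) = ω (b + m) := by
      intro m
      calc ω (a + m) = ω (a + m % n) := Stmt9.omega_congr hp (hmodadd a m).symm
        _ = ω (b + m % n) := h (m % n) (Nat.mod_lt _ hn)
        _ = ω (b + m) := Stmt9.omega_congr hp (hmodadd b m)
    set t := b - a with hts
    have hbt : b = a + t := by omega
    have haan : a ≤ a * n := Nat.le_mul_of_pos_right a hn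
    have hshift_t : ∀ k, ω (k + t) = ω k := by
      intro k
      have h2 := hall (k + a * n - a)
      rw [show a + (k + a * n - a) = k + a * n by omega] at h2
      rw [hbt, show a + t + (k + a * n - a) = (k + t) + a * n by omega] at h2
      rw [Stmt9.omega_add_mul hp, Stmt9.omega_add_mul hp] at h2
      exact h2.symm
    have ht0 : t % n = 0 := by
      apply hmod0
      funext k
      rw [Stmt9.shift_iterate]
      exact hshift_t k
    obtain ⟨c, hc⟩ := Nat.dvd_of_mod_eq_zero ht0
    rw [hbt, hc, Nat.add_mul_mod_self_left]
  have hcong : ∀ a b, (∀ m, m < n → ω (a + m) = ω (b + m)) → a % n = b % n := by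
    intro a b h
    rcases le_total a b with hab | hab
    · exact hcongle a b hab h
    · exact (hcongle b a hab (fun m hm => (h m hm).symm)).symm
  -- the key characterisation of vanishing products
  have hmu0 := Stmt9.mu_cyl_zero_iff hn ω μ hμ
  have hzero : ∀ w, w ≠ [] → (listProd A w = 0 ↔ ∀ l < n, shift^[l] ω ∉ cyl w) :=
    fun w hw => (Stmt9.gibbs_zero_iff A s C P μ hs hC hG w hw).trans (hmu0 w)
  have hkey : ∀ w : List (Fin M), w ≠ [] →
      (listProd A w ≠ 0 ↔ ∃ l, l < n ∧ ∀ m (hm : m < w.length), ω (m + l) = w[m]) := by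
    intro w hw
    rw [Ne, hzero w hw]
    push_neg
    constructor
    · rintro ⟨l, hl, hmem⟩
      refine ⟨l, hl, ?_⟩
      intro m hm
      have h1 := (Stmt9.mem_cyl_iff w _).1 hmem m hm
      rw [← h1, Stmt9.shift_iterate]
    · rintro ⟨l, hl, h⟩
      refine ⟨l, hl, (Stmt9.mem_cyl_iff w _).2 ?_⟩
      intro m hm
      rw [Stmt9.shift_iterate]
      exact h m hm
  -- nonvanishing along the orbit
  have hNZ : ∀ j m, 0 < m → listProd A (Stmt9.seg ω j m) ≠ 0 := by
    intro j m hm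
    apply (hkey _ (by rw [← List.length_pos_iff]; simpa using hm)).2
    refine ⟨j % n, Nat.mod_lt _ hn, ?_⟩
    intro m' hm'
    rw [Stmt9.seg_getElem]
    apply Stmt9.omega_congr hp
    rw [hmodadd m' j, Nat.add_comm m' j]
  -- vanishing: long orbit segment followed by a wrong letter
  have hV1 : ∀ j m i, n ≤ m → i ≠ ω (j + m) → listProd A (Stmt9.seg ω j m ++ [i]) = 0 := by
    intro j m i hnm hi
    by_contra h0
    obtain ⟨l, hl, h⟩ := (hkey _ (by simp)).1 h0
    have hlen : (Stmt9.seg ω j m ++ [i]).length = m + 1 := by simp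
    have hup : ∀ m', m' < m → ω (m' + l) = ω (j + m') := by
      intro m' hm'
      have h1 := h m' (by rw [hlen]; omega)
      rwa [List.getElem_append_left (by simpa using hm'), Stmt9.seg_getElem] at h1
    have hlast : ω (m + l) = i := by
      have h1 := h m (by rw [hlen]; omega)
      rw [List.getElem_append_right (by simp)] at h1
      simpa using h1
    have hlj : l % n = j % n :=
      hcong l j (fun m' hm' => by
        rw [Nat.add_comm l m']
        exact hup m' (by omega))
    apply hi
    rw [← hlast]
    apply Stmt9.omega_congr hp
    rw [Nat.add_mod m l, hlj, ← Nat.add_mod, Nat.add_comm m j]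
  -- vanishing: two misaligned orbit segments
  have hV2 : ∀ j k, j % n ≠ k % n →
      listProd A (Stmt9.seg ω k (d * n) ++ Stmt9.seg ω j n) = 0 := by
    intro j k hjk
    by_contra h0
    obtain ⟨l, hl, h⟩ := (hkey _ (by
      intro hemp
      have := congrArg List.length hemp
      simp at this
      omega)).1 h0
    have hlen : (Stmt9.seg ω k (d * n) ++ Stmt9.seg ω j n).length = d * n + n := by simp
    have hdn : n ≤ d * n := Nat.le_mul_of_pos_left n hd0
    have hup : ∀ m', m' < d * n → ω (m' + l) = ω (k + m') := by
      intro m' hm'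
      have h1 := h m' (by rw [hlen]; omega)
      rwa [List.getElem_append_left (by simpa using hm'), Stmt9.seg_getElem] at h1
    have hlk : l % n = k % n :=
      hcong l k (fun m' hm' => by
        rw [Nat.add_comm l m']
        exact hup m' (by omega))
    have hup2 : ∀ m', m' < n → ω ((l + d * n) + m') = ω (j + m') := by
      intro m' hm'
      have h1 := h (d * n + m') (by rw [hlen]; omega)
      rw [List.getElem_append_right (by simpa using Nat.le_add_right _ _)] at h1
      simp only [Stmt9.seg_length, Nat.add_sub_cancel_left] at h1
      rw [Stmt9.seg_getElem] at h1
      rw [← h1]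
      congr 1
      omega
    have hlj : (l + d * n) % n = j % n := hcong (l + d * n) j hup2
    apply hjk
    rw [← hlj, Nat.add_mul_mod_self_right, hlk]
  -- the cyclic products and eventual ranges
  set q : ℕ → Matrix (Fin d) (Fin d) ℝ := fun j => listProd A (Stmt9.seg ω j n) with hqDef
  have hq_congr : ∀ a b, a % n = b % n → q a = q b := by
    intro a b h
    simp only [hqDef]
    rw [Stmt9.seg_congr hp h]
  have hqpow : ∀ j N, listProd A (Stmt9.seg ω j (N * n)) = q j ^ N := by
    intro j N
    induction N with
    | zero => simp [Stmt9.seg, listProd]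
    | succ N ih =>
        rw [show (N + 1) * n = N * n + n by ring, Stmt9.listProd_seg_add, ih, pow_succ']
        congr 1
        exact hq_congr (j + N * n) j (Nat.add_mul_mod_self_right j N n)
  set Rn : ℕ → Submodule ℝ (Fin d → ℝ) := fun j => LinearMap.range ((q j).mulVecLin ^ d)
    with hRnDef
  have hstab : ∀ j k, LinearMap.range ((q j).mulVecLin ^ (d + k)) = Rn j := by
    intro j k
    rw [hRnDef]
    exact Stmt9.range_pow_stab _ k
  have hmapRange : ∀ X Y : Matrix (Fin d) (Fin d) ℝ,
      (LinearMap.range Y.mulVecLin).map X.mulVecLin = LinearMap.range (X * Y).mulVecLin := by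
    intro X Y
    rw [Matrix.mulVecLin_mul, LinearMap.range_comp]
  have hRn_eq : ∀ j, Rn j = LinearMap.range ((q j ^ d).mulVecLin) := by
    intro j
    rw [hRnDef, Stmt9.mulVecLin_pow]
  have hmapRn : ∀ j, (Rn j).map ((q j).mulVecLin) = Rn j := by
    intro j
    conv_lhs => rw [hRnDef]
    rw [← LinearMap.range_comp, ← Module.End.mul_eq_comp, ← pow_succ']
    exact hstab j 1
  have hinjRn : ∀ j, ∀ x ∈ Rn j, (q j).mulVecLin x = 0 → x = 0 :=
    fun j => Stmt9.restrict_surj_inj _ _ (hmapRn j)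
  have hqd_seg : ∀ j, q j ^ d = listProd A (Stmt9.seg ω j (d * n)) := fun j => (hqpow j d).symm
  have hRn_ne : ∀ j, Rn j ≠ ⊥ := by
    intro j
    rw [hRn_eq, Ne, LinearMap.range_eq_bot]
    intro h0
    exact hNZ j (d * n) (by positivity) (by rw [← hqd_seg]; exact Stmt9.mulVecLin_eq_zero h0)
  have hF3 : ∀ (i : Fin M) (j : ℕ), i ≠ ω j → (Rn j).map (A i).mulVecLin = ⊥ := by
    intro i j hij
    rw [hRn_eq, hmapRange, LinearMap.range_eq_bot, hqd_seg, ← Stmt9.listProd_concat,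
      hV1 j (d * n) i (Nat.le_mul_of_pos_left n hd0)
        (by rwa [Stmt9.omega_add_mul hp j d])]
    exact Matrix.mulVecLin_zero
  have hE1 : ∀ j N, A (ω j) * q j ^ N = q (j + 1) ^ N * A (ω j) := by
    intro j N
    have h1 : listProd A (Stmt9.seg ω j (N * n + 1)) = A (ω j) * q j ^ N := by
      rw [Stmt9.seg_succ, Stmt9.listProd_concat, hqpow, Stmt9.omega_add_mul hp]
    have h2 : listProd A (Stmt9.seg ω j (1 + N * n)) = q (j + 1) ^ N * A (ω j) := by
      rw [Stmt9.listProd_seg_add, hqpow, Stmt9.seg_one, Stmt9.listProd_singleton]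
    rw [← h1, show N * n + 1 = 1 + N * n by omega, h2]
  have hF4 : ∀ j : ℕ, (Rn j).map (A (ω j)).mulVecLin = Rn (j + 1) := by
    intro j
    apply le_antisymm
    · rw [hRn_eq, hmapRange, hE1 j d, Matrix.mulVecLin_mul, LinearMap.range_comp]
      calc Submodule.map ((q (j + 1) ^ d).mulVecLin) (LinearMap.range (A (ω j)).mulVecLin)
          ≤ LinearMap.range ((q (j + 1) ^ d).mulVecLin) := LinearMap.map_le_range
        _ = Rn (j + 1) := (hRn_eq (j + 1)).symm
    · have e1 : Rn (j + 1) = LinearMap.range ((q (j + 1) ^ (d + 1)).mulVecLin) := by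
        rw [Stmt9.mulVecLin_pow]
        exact (hstab (j + 1) 1).symm
      have e2 : q (j + 1) ^ (d + 1)
          = A (ω j) * listProd A (Stmt9.seg ω (j + 1) (d * n + (n - 1))) := by
        rw [← hqpow (j + 1) (d + 1), show (d + 1) * n = (d * n + (n - 1)) + 1 by
          rw [add_one_mul]; omega, Stmt9.seg_succ, Stmt9.listProd_concat,
          show j + 1 + (d * n + (n - 1)) = j + (d + 1) * n by rw [add_one_mul]; omega,
          Stmt9.omega_add_mul hp]
      have e3 : LinearMap.range (listProd A (Stmt9.seg ω (j + 1) (d * n + (n - 1)))).mulVecLin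
          ≤ Rn j := by
        rw [show d * n + (n - 1) = (n - 1) + d * n by omega, Stmt9.listProd_seg_add]
        have e4 : listProd A (Stmt9.seg ω (j + 1 + (n - 1)) (d * n)) = q j ^ d := by
          rw [show j + 1 + (n - 1) = j + n by have := hn; omega, hqpow,
            hq_congr (j + n) j (Nat.add_mod_right j n)]
        rw [e4, Matrix.mulVecLin_mul, LinearMap.range_comp]
        calc Submodule.map ((q j ^ d).mulVecLin) _
            ≤ LinearMap.range ((q j ^ d).mulVecLin) := LinearMap.map_le_range
          _ = Rn j := (hRn_eq j).symm
      rw [e1, e2, Matrix.mulVecLin_mul, LinearMap.range_comp]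
      exact Submodule.map_mono e3
  have hq_factor : ∀ j, q j = listProd A (Stmt9.seg ω (j + 1) (n - 1)) * A (ω j) := by
    intro j
    have h1 : listProd A (Stmt9.seg ω j (1 + (n - 1)))
        = listProd A (Stmt9.seg ω (j + 1) (n - 1)) * A (ω j) := by
      rw [Stmt9.listProd_seg_add, Stmt9.seg_one, Stmt9.listProd_singleton]
    rw [← h1]
    show listProd A (Stmt9.seg ω j n) = _
    rw [show (1 : ℕ) + (n - 1) = n by omega]
  have hinjA : ∀ j, ∀ x ∈ Rn j, (A (ω j)).mulVecLin x = 0 → x = 0 := by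
    intro j x hx h0
    apply hinjRn j x hx
    rw [hq_factor j, Matrix.mulVecLin_mul, LinearMap.comp_apply, h0, map_zero]
  have hfr_succ : ∀ j, Module.finrank ℝ (Rn (j + 1)) = Module.finrank ℝ (Rn j) := by
    intro j
    rw [← hF4 j]
    exact Stmt9.finrank_map_of_injOn _ _ (hinjA j)
  have hfr_all : ∀ j, Module.finrank ℝ (Rn j) = Module.finrank ℝ (Rn 0) := by
    intro j
    induction j with
    | zero => rfl
    | succ j ih => rw [hfr_succ j, ih]
  have hRn_mod : ∀ a, Rn a = Rn (a % n) := by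
    intro a
    simp only [hRnDef]
    rw [hq_congr a (a % n) (Nat.mod_mod_of_dvd a dvd_rfl).symm]
  have hkill : ∀ j k, j % n ≠ k % n → (Rn k).map ((q j).mulVecLin) = ⊥ := by
    intro j k hjk
    rw [hRn_eq, hmapRange, LinearMap.range_eq_bot]
    have : q j * q k ^ d = 0 := by
      rw [hqd_seg]
      conv_lhs => rw [hqDef]
      rw [← Stmt9.listProd_append, hV2 j k hjk]
    rw [this]
    exact Matrix.mulVecLin_zero
  -- the family of subspaces
  set R : Fin n → Submodule ℝ (Fin d → ℝ) := fun j => Rn j.val with hRdef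
  have hval_mod : ∀ j : Fin n, (j.val) % n = j.val := fun j => Nat.mod_eq_of_lt j.isLt
  have hindep : iSupIndep R := by
    rw [iSupIndep_def]
    intro i
    rw [Submodule.disjoint_def]
    intro x hxi hxs
    have hmap0 : Submodule.map ((q i.val).mulVecLin) (⨆ j, ⨆ (_ : j ≠ i), R j) = ⊥ := by
      rw [Submodule.map_iSup]
      rw [iSup_eq_bot]
      intro j
      rw [Submodule.map_iSup, iSup_eq_bot]
      intro hji
      apply hkill
      rw [hval_mod, hval_mod]
      exact fun h => hji (Fin.ext h.symm)
    have hx0 : (q i.val).mulVecLin x = 0 := by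
      have hmem : (q i.val).mulVecLin x ∈ (⊥ : Submodule ℝ (Fin d → ℝ)) :=
        hmap0 ▸ Submodule.mem_map_of_mem hxs
      simpa using hmem
    exact hinjRn i.val x hxi hx0
  have hsucc_val : ∀ j : Fin n, ((j + 1 : Fin n) : ℕ) = (j.val + 1) % n := by
    intro j
    rw [Fin.val_add, Fin.val_one']
    rw [hmodadd]
  have hRsucc : ∀ j : Fin n, Rn (j.val + 1) = R (j + 1) := by
    intro j
    have h1 : R (j + 1) = Rn (((j : ℕ) + 1) % n) := by
      show Rn ((j + 1 : Fin n).val) = _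
      rw [hsucc_val j]
    rw [h1, ← hRn_mod]
  have hsup : (⨆ j, R j) = ⊤ := by
    by_contra htop
    apply hA
    refine ⟨⨆ j, R j, ?_, ?_, htop⟩
    · intro i
      rw [Submodule.map_iSup]
      apply iSup_le
      intro j
      by_cases hij : i = ω j.val
      · have hmap : Submodule.map (A i).mulVecLin (R j) = R (j + 1) := by
          rw [hij]
          exact (hF4 j.val).trans (hRsucc j)
        rw [hmap]
        exact le_iSup R (j + 1)
      · have hmap : Submodule.map (A i).mulVecLin (R j) = ⊥ := hF3 i j.val hij
        rw [hmap]
        exact bot_le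
    · intro hbot
      apply hRn_ne 0
      have h1 : R ⟨0, hn⟩ ≤ ⊥ := hbot ▸ le_iSup R ⟨0, hn⟩
      exact le_bot_iff.1 h1
  have hinternal : DirectSum.IsInternal R :=
    (DirectSum.isInternal_submodule_iff_iSupIndep_and_iSup_eq_top R).2 ⟨hindep, hsup⟩
  have hfrR : ∀ j : Fin n, Module.finrank ℝ (R j) = Module.finrank ℝ (Rn 0) :=
    fun j => hfr_all j.val
  have hsumdim : d = n * Module.finrank ℝ (Rn 0) := by
    have e := LinearEquiv.finrank_eq
      (LinearEquiv.ofBijective (DirectSum.coeLinearMap R) hinternal)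
    rw [Module.finrank_directSum, hfrtot] at e
    rw [Finset.sum_congr rfl (fun j _ => hfrR j), Finset.sum_const, Finset.card_univ,
      Fintype.card_fin, smul_eq_mul] at e
    omega
  have hdvd : n ∣ d := ⟨_, hsumdim⟩
  have hr : d / n = Module.finrank ℝ (Rn 0) := by
    have h2 : n * Module.finrank ℝ (Rn 0) / n = Module.finrank ℝ (Rn 0) :=
      Nat.mul_div_cancel_left _ hn
    rw [← hsumdim] at h2
    exact h2
  refine ⟨hdvd, R, ?_, hinternal, ?_, ?_, ?_, ?_⟩
  · intro j
    rw [hfrR j, hr]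
  · intro i j hij
    exact hF3 i j.val hij
  · intro j
    exact (hF4 j.val).trans (hRsucc j)
  · intro i
    have hw : wordProd A (fun k : Fin n => ω ((i + k : Fin n) : ℕ)) = q i.val := by
      have hlist : (List.ofFn fun k : Fin n => ω ((i + k : Fin n) : ℕ))
          = Stmt9.seg ω (i : ℕ) n := by
        unfold Stmt9.seg
        congr 1
        funext k
        apply Stmt9.omega_congr hp
        rw [Fin.val_add, Nat.mod_mod_of_dvd _ dvd_rfl]
      rw [Stmt9.wordProd_eq_listProd, hlist]
    rw [hw]
    refine ⟨?_, ?_, ?_⟩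
    · intro v hv
      have : (q i.val).mulVecLin v ∈ Rn i.val := by
        rw [← hmapRn i.val]
        exact Submodule.mem_map_of_mem hv
      simpa [Matrix.mulVecLin_apply] using this
    · intro x hx y hy hxy
      have hxy' : (q i.val).mulVec x = (q i.val).mulVec y := hxy
      have hsub : x - y ∈ Rn i.val := Submodule.sub_mem _ hx hy
      have h0 : (q i.val).mulVecLin (x - y) = 0 := by
        rw [map_sub]
        simp only [Matrix.mulVecLin_apply]
        rw [hxy']
        simp
      have := hinjRn i.val (x - y) hsub h0
      exact sub_eq_zero.1 this
    · intro y hy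
      have hy' : y ∈ (Rn i.val).map ((q i.val).mulVecLin) := by
        rw [hmapRn i.val]
        exact hy
      obtain ⟨x, hx, hxy⟩ := hy'
      exact ⟨x, hx, by simpa [Matrix.mulVecLin_apply] using hxy⟩
  · intro x
    rw [Stmt9.wordProd_eq_listProd]
    have hw_ne : List.ofFn x ≠ [] := by
      intro h
      have := congrArg List.length h
      simp at this
      omega
    rw [Ne, ← Ne, hkey _ hw_ne]
    constructor
    · rintro ⟨l, hl, h⟩
      refine ⟨⟨l, hl⟩, ?_⟩
      intro k
      have hk : (k : ℕ) < (List.ofFn x).length := by simpa using k.isLt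
      have h1 := h k.val hk
      rw [List.getElem_ofFn] at h1
      have h2 : x k = ω (k.val + l) := by
        rw [← h1]
      rw [h2]
      apply Stmt9.omega_congr hp
      rw [Fin.val_add, Nat.mod_mod_of_dvd _ dvd_rfl, Nat.add_comm]
    · rintro ⟨i, h⟩
      refine ⟨i.val, i.isLt, ?_⟩
      intro m hm
      have hmn : m < n := by simpa using hm
      rw [List.getElem_ofFn]
      have h1 := h ⟨m, hmn⟩
      rw [show (⟨m, by simpa using hm⟩ : Fin n) = ⟨m, hmn⟩ from rfl, h1]
      apply Stmt9.omega_congr hp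
      rw [Fin.val_add, Nat.mod_mod_of_dvd _ dvd_rfl, Nat.add_comm]
end
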